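/- arXiv:2605.02670 — 3 statements merged into one kernel-verified Lean document; each statement's English description precedes it below -/
import Mathlib

section
/- For every real number λ > 0 and every β ∈ (0,1), the Balakrishnan integral identity holds: (sin(πβ)/π) · ∫₀^∞ s^(−β) · (λ + s)^(−1) ds = λ^(−β), where s^(−β) and λ^(−β) denote real powers. -/
open Real MeasureTheory Set

/-! The substitution `s = x / (1 - x)` turns `∫₀^∞ s^(a-1) (1+s)^(-(a+b)) ds` into Euler's
beta integral `B(a, b) = Γ(a) Γ(b) / Γ(a + b)`. For `a = 1 - β`, `b = β` the reflection
formula `Γ(β) Γ(1 - β) = π / sin (π β)` evaluates it, and the scaling `s ↦ λ s` produces the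
factor `λ^(-β)`. -/

theorem integral_Ioo_rpow_mul_one_sub_rpow {a b : ℝ} (ha : 0 < a) (hb : 0 < b) :
    ∫ x in Ioo (0 : ℝ) 1, x ^ (a - 1) * (1 - x) ^ (b - 1)
      = Gamma a * Gamma b / Gamma (a + b) := by
  have hcomplex : Complex.betaIntegral a b
      = ((∫ x in (0 : ℝ)..1, x ^ (a - 1) * (1 - x) ^ (b - 1) : ℝ) : ℂ) := by
    rw [Complex.betaIntegral, ← intervalIntegral.integral_ofReal]
    refine intervalIntegral.integral_congr fun x hx => ?_
    rw [uIcc_of_le zero_le_one] at hx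
    push_cast
    rw [Complex.ofReal_cpow hx.1, Complex.ofReal_cpow (sub_nonneg.2 hx.2)]
    push_cast
    rfl
  have hgamma := Complex.betaIntegral_eq_Gamma_mul_div a b (by simpa) (by simpa)
  rw [hcomplex, ← Complex.ofReal_add] at hgamma
  simp only [Complex.Gamma_ofReal] at hgamma
  rw [← integral_Ioc_eq_integral_Ioo, ← intervalIntegral.integral_of_le zero_le_one]
  exact_mod_cast hgamma

theorem integral_Ioi_zero_eq_integral_Ioo_comp_div_one_sub {E : Type*} [NormedAddCommGroup E]
    [NormedSpace ℝ E] (f : ℝ → E) :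
    ∫ s in Ioi (0 : ℝ), f s
      = ∫ x in Ioo (0 : ℝ) 1, ((1 - x) ^ 2)⁻¹ • f (x / (1 - x)) := by
  have himage : (fun x : ℝ => x / (1 - x)) '' Ioo 0 1 = Ioi 0 := by
    ext s
    constructor
    · rintro ⟨x, hx, rfl⟩
      exact div_pos hx.1 (sub_pos.2 hx.2)
    · intro (hs : 0 < s)
      refine ⟨s / (1 + s),
        ⟨by positivity, (div_lt_one (by positivity)).2 (by linarith)⟩, ?_⟩
      field_simp
      ring
  have hderiv : ∀ x ∈ Ioo (0 : ℝ) 1,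
      HasDerivWithinAt (fun x : ℝ => x / (1 - x)) ((1 - x) ^ 2)⁻¹ (Ioo 0 1) x := by
    intro x hx
    have hne : 1 - x ≠ 0 := (sub_pos.2 hx.2).ne'
    have h : HasDerivAt (fun x : ℝ => x / (1 - x))
        ((1 * (1 - x) - x * (0 - 1)) / (1 - x) ^ 2) x :=
      (hasDerivAt_id x).div ((hasDerivAt_const x 1).sub (hasDerivAt_id x)) hne
    exact h.hasDerivWithinAt.congr_deriv (by ring)
  have hinj : InjOn (fun x : ℝ => x / (1 - x)) (Ioo 0 1) := by
    intro x hx y hy hxy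
    have := (sub_pos.2 hx.2).ne'
    have := (sub_pos.2 hy.2).ne'
    field_simp at hxy
    linarith
  rw [← himage, integral_image_eq_integral_abs_deriv_smul measurableSet_Ioo hderiv hinj]
  refine setIntegral_congr_fun measurableSet_Ioo fun x _ => ?_
  rw [abs_of_nonneg (by positivity)]

theorem integral_Ioi_rpow_mul_one_add_rpow {a b : ℝ} (ha : 0 < a) (hb : 0 < b) :
    ∫ s in Ioi (0 : ℝ), s ^ (a - 1) * (1 + s) ^ (-(a + b))
      = Gamma a * Gamma b / Gamma (a + b) := by
  rw [integral_Ioi_zero_eq_integral_Ioo_comp_div_one_sub,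
    ← integral_Ioo_rpow_mul_one_sub_rpow ha hb]
  refine setIntegral_congr_fun measurableSet_Ioo fun x hx => ?_
  have hy : 0 < 1 - x := sub_pos.2 hx.2
  have hone_add : 1 + x / (1 - x) = (1 - x)⁻¹ := by field_simp; ring
  have hsq : ((1 - x) ^ 2)⁻¹ = (1 - x) ^ (-2 : ℝ) := by
    rw [rpow_neg hy.le, ← rpow_natCast]; norm_num
  rw [smul_eq_mul, hone_add, hsq, div_rpow hx.1.le hy.le, inv_rpow hy.le, ← rpow_neg hy.le,
    neg_neg, div_eq_mul_inv, ← rpow_neg hy.le]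
  calc (1 - x) ^ (-2 : ℝ) * (x ^ (a - 1) * (1 - x) ^ (-(a - 1)) * (1 - x) ^ (a + b))
      = x ^ (a - 1) * ((1 - x) ^ (-2 : ℝ) * (1 - x) ^ (-(a - 1)) * (1 - x) ^ (a + b)) := by ring
    _ = x ^ (a - 1) * (1 - x) ^ (b - 1) := by
      rw [← rpow_add hy, ← rpow_add hy]; ring_nf

theorem integral_Ioi_rpow_neg_mul_one_add_inv {β : ℝ} (hβ0 : 0 < β) (hβ1 : β < 1) :
    ∫ s in Ioi (0 : ℝ), s ^ (-β) * (1 + s)⁻¹ = π / sin (π * β) := by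
  have h := integral_Ioi_rpow_mul_one_add_rpow (sub_pos.2 hβ1) hβ0
  rw [sub_sub_cancel_left, sub_add_cancel, Gamma_one, div_one, mul_comm, Gamma_mul_Gamma_one_sub]
    at h
  rw [← h]
  refine setIntegral_congr_fun measurableSet_Ioi fun s _ => ?_
  rw [rpow_neg_one]

theorem integral_Ioi_rpow_neg_mul_add_inv (β : ℝ) {c : ℝ} (hc : 0 < c) :
    ∫ s in Ioi (0 : ℝ), s ^ (-β) * (c + s)⁻¹
      = c ^ (-β) * ∫ s in Ioi (0 : ℝ), s ^ (-β) * (1 + s)⁻¹ := by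
  have h := integral_comp_mul_left_Ioi (fun s : ℝ => s ^ (-β) * (c + s)⁻¹) 0 hc
  rw [mul_zero, smul_eq_mul, eq_inv_mul_iff_mul_eq₀ hc.ne'] at h
  rw [← h, ← integral_const_mul, ← integral_const_mul]
  refine setIntegral_congr_fun measurableSet_Ioi fun s (hs : 0 < s) => ?_
  rw [mul_rpow hc.le hs.le, ← mul_one_add, mul_inv]
  have := hc.ne'
  field_simp

theorem balakrishnan_integral_identity (lam β : ℝ) (hlam : 0 < lam)
    (hβ0 : 0 < β) (hβ1 : β < 1) :
    (Real.sin (Real.pi * β) / Real.pi) *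
      ∫ s in Set.Ioi (0 : ℝ), s ^ (-β) * (lam + s)⁻¹ = lam ^ (-β) := by
  rw [integral_Ioi_rpow_neg_mul_add_inv β hlam, integral_Ioi_rpow_neg_mul_one_add_inv hβ0 hβ1]
  have hsin : sin (π * β) ≠ 0 :=
    (sin_pos_of_pos_of_lt_pi (by positivity) (by nlinarith [pi_pos])).ne'
  field_simp
end

section
/- For every real number λ > 0 and every β ∈ (0,1), the log-substituted Balakrishnan representation holds: λ^(−β) = (sin(πβ)/π) · ∫_ℝ e^((1−β)·y) · (λ + e^y)^(−1) dy. -/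
open Real MeasureTheory

/-!
Translating `y` by `log λ` pulls out the factor `λ ^ (-β)`. The sigmoid substitution
`u = (1 + e^(-t))⁻¹`, for which `e^t = u / (1 - u)` and `du = u (1 - u) dt`, turns the remaining
integral into the Beta integral `B(1 - β, β) = Γ(1 - β) Γ(β) = π / sin (π β)`.
-/

theorem integral_rpow_mul_one_sub_rpow_eq_Gamma {a b : ℝ} (ha : 0 < a) (hb : 0 < b) :
    ∫ x in (0 : ℝ)..1, x ^ (a - 1) * (1 - x) ^ (b - 1) = Gamma a * Gamma b / Gamma (a + b) := by
  have hbeta : Complex.betaIntegral a b =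
      ↑(∫ x in (0 : ℝ)..1, x ^ (a - 1) * (1 - x) ^ (b - 1)) := by
    rw [Complex.betaIntegral, ← intervalIntegral.integral_ofReal]
    refine intervalIntegral.integral_congr fun x hx => ?_
    rw [Set.uIcc_of_le zero_le_one] at hx
    push_cast
    rw [Complex.ofReal_cpow hx.1, Complex.ofReal_cpow (sub_nonneg.2 hx.2)]
    push_cast
    ring
  have hGamma := Complex.Gamma_mul_Gamma_eq_betaIntegral (s := a) (t := b) (by simpa) (by simpa)
  rw [hbeta, ← Complex.ofReal_add, Complex.Gamma_ofReal, Complex.Gamma_ofReal,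
    Complex.Gamma_ofReal] at hGamma
  norm_cast at hGamma
  rw [hGamma, mul_div_cancel_left₀ _ (Gamma_pos_of_pos (add_pos ha hb)).ne']

theorem integral_rpow_neg_mul_one_sub_rpow_eq_pi_div_sin {β : ℝ} (hβ0 : 0 < β) (hβ1 : β < 1) :
    ∫ x in (0 : ℝ)..1, x ^ (-β) * (1 - x) ^ (β - 1) = π / sin (π * β) := by
  have h := integral_rpow_mul_one_sub_rpow_eq_Gamma (sub_pos.2 hβ1) hβ0
  rw [sub_sub_cancel_left, sub_add_cancel, Gamma_one, div_one, mul_comm] at h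
  rw [h, Gamma_mul_Gamma_one_sub]

theorem setIntegral_Ioo_zero_one_eq_integral_sigmoid {E : Type*} [NormedAddCommGroup E]
    [NormedSpace ℝ E] (f : ℝ → E) :
    ∫ u in Set.Ioo 0 1, f u = ∫ t, (sigmoid t * (1 - sigmoid t)) • f (sigmoid t) := by
  rw [← range_sigmoid, ← Set.image_univ,
    integral_image_eq_integral_abs_deriv_smul MeasurableSet.univ
      (fun t _ => (hasDerivAt_sigmoid t).hasDerivWithinAt) sigmoid_injective.injOn,
    setIntegral_univ]
  congr! 3 with t
  exact abs_of_pos (mul_pos (sigmoid_pos t) (sub_pos.2 (sigmoid_lt_one t)))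

theorem one_sub_sigmoid (t : ℝ) : 1 - sigmoid t = (1 + exp t)⁻¹ := by
  rw [← sigmoid_neg, sigmoid_def, neg_neg]

theorem sigmoid_div_one_sub_sigmoid (t : ℝ) : sigmoid t / (1 - sigmoid t) = exp t := by
  rw [one_sub_sigmoid, sigmoid_def, exp_neg]
  field_simp
  ring

theorem sigmoid_mul_one_sub_sigmoid_mul_rpow (β t : ℝ) :
    sigmoid t * (1 - sigmoid t) * (sigmoid t ^ (-β) * (1 - sigmoid t) ^ (β - 1)) =
      exp ((1 - β) * t) * (1 + exp t)⁻¹ := by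
  have hσ := sigmoid_pos t
  have hτ : 0 < 1 - sigmoid t := sub_pos.2 (sigmoid_lt_one t)
  rw [← one_sub_sigmoid, mul_comm (1 - β), exp_mul, ← sigmoid_div_one_sub_sigmoid,
    div_rpow hσ.le hτ.le, show -β = (1 - β) - 1 by ring, rpow_sub_one hσ.ne',
    rpow_sub_one hτ.ne', rpow_sub hτ, rpow_one]
  field_simp

theorem integral_exp_mul_inv_one_add_exp {β : ℝ} (hβ0 : 0 < β) (hβ1 : β < 1) :
    ∫ t, exp ((1 - β) * t) * (1 + exp t)⁻¹ = π / sin (π * β) := by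
  rw [← integral_rpow_neg_mul_one_sub_rpow_eq_pi_div_sin hβ0 hβ1,
    intervalIntegral.integral_of_le zero_le_one, integral_Ioc_eq_integral_Ioo,
    setIntegral_Ioo_zero_one_eq_integral_sigmoid]
  simp_rw [smul_eq_mul, sigmoid_mul_one_sub_sigmoid_mul_rpow]

theorem integral_exp_mul_inv_add_exp (β : ℝ) {lam : ℝ} (hlam : 0 < lam) :
    ∫ y, exp ((1 - β) * y) * (lam + exp y)⁻¹ =
      lam ^ (-β) * ∫ t, exp ((1 - β) * t) * (1 + exp t)⁻¹ := by
  rw [← integral_add_right_eq_self _ (log lam), ← integral_const_mul]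
  congr 1 with t
  rw [mul_add, exp_add, exp_add, mul_comm (1 - β) (log lam), ← rpow_def_of_pos hlam,
    exp_log hlam, show -β = (1 - β) - 1 by ring, rpow_sub_one hlam.ne']
  field_simp

theorem balakrishnan_log_representation (lam β : ℝ) (hlam : 0 < lam)
    (hβ0 : 0 < β) (hβ1 : β < 1) :
    lam ^ (-β) = (Real.sin (Real.pi * β) / Real.pi) *
      ∫ y : ℝ, Real.exp ((1 - β) * y) * (lam + Real.exp y)⁻¹ := by
  have hsin : sin (π * β) ≠ 0 :=
    (sin_pos_of_pos_of_lt_pi (by positivity) (by nlinarith [pi_pos])).ne'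
  rw [integral_exp_mul_inv_add_exp β hlam, integral_exp_mul_inv_one_add_exp hβ0 hβ1,
    mul_left_comm, div_mul_div_comm, mul_comm (sin (π * β)) π,
    div_self (mul_ne_zero pi_ne_zero hsin), mul_one]
end

section
/- Let A be the n × n real tridiagonal matrix with main diagonal d₁, …, dₙ, subdiagonal l₁, …, lₙ₋₁ and superdiagonal u₁, …, uₙ₋₁, and define the Thomas-algorithm coefficients by d′₁ = d₁, and for i ≥ 2, l′ᵢ = lᵢ₋₁ / d′ᵢ₋₁ and d′ᵢ = dᵢ − l′ᵢ · uᵢ₋₁, assuming all d′ᵢ are nonzero. Given a right-hand side vector b, define the forward substitution y₁ = b₁, yᵢ = bᵢ − l′ᵢ · yᵢ₋₁ for i ≥ 2, and the backward substitution wₙ = yₙ / d′ₙ, wᵢ = (yᵢ − uᵢ · wᵢ₊₁) / d′ᵢ for i ≤ n − 1. Then the resulting vector w solves the tridiagonal system: A w = b. -/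
/-!
The Thomas recursion is Gaussian elimination without pivoting: the formulas for `d'` and `l'` say
exactly that `A = L U`, where `L` is unit lower bidiagonal with subdiagonal `l'` and `U` is upper
bidiagonal with diagonal `d'` and superdiagonal `u`. The forward recursion solves `L y = b` and the
backward one `U w = y`, hence `A w = L (U w) = L y = b`. Since `L` and `U` are tridiagonal as
well, all three identities are checked row by row on the three-term formula for `T v`.
-/

open Matrix

variable {R : Type*}

/-- `(T v) k` for the `n × n` tridiagonal `T` with `T k k = d k`, `T k (k + 1) = u k` and
`T (k + 1) k = l k`: the subdiagonal is indexed by column. -/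
def tridiagMulVec [Semiring R] (n : ℕ) (d l u v : ℕ → R) (k : ℕ) : R :=
  (if 0 < k then l (k - 1) * v (k - 1) else 0) + d k * v k +
    (if k + 1 < n then u k * v (k + 1) else 0)

theorem Fin.sum_ite_val_eq [AddCommMonoid R] (n : ℕ) (c : R) (m : ℕ) :
    ∑ j : Fin n, (if (j : ℕ) = m then c else 0) = if m < n then c else 0 := by
  rw [Fin.sum_univ_eq_sum_range (fun j => if j = m then c else 0), Finset.sum_ite_eq']
  simp only [Finset.mem_range]

theorem mulVec_apply_eq_tridiagMulVec [Semiring R] {n : ℕ} {A : Matrix (Fin n) (Fin n) R}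
    {d l u : ℕ → R}
    (hdiag : ∀ i : Fin n, A i i = d i)
    (hsub : ∀ i j : Fin n, (i : ℕ) = (j : ℕ) + 1 → A i j = l j)
    (hsup : ∀ i j : Fin n, (j : ℕ) = (i : ℕ) + 1 → A i j = u i)
    (hzero : ∀ i j : Fin n, (i : ℕ) + 2 ≤ (j : ℕ) ∨ (j : ℕ) + 2 ≤ (i : ℕ) → A i j = 0)
    (v : ℕ → R) (i : Fin n) :
    (A *ᵥ fun j : Fin n => v j) i = tridiagMulVec n d l u v i := by
  have hentry : ∀ j : Fin n, A i j * v j =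
      (if 0 < (i : ℕ) then (if (j : ℕ) = i - 1 then l (i - 1) * v (i - 1) else 0) else 0) +
        (if (j : ℕ) = i then d i * v i else 0) +
        (if (j : ℕ) = i + 1 then u i * v (i + 1) else 0) := by
    intro j
    obtain h | h | rfl | h | h : (j : ℕ) + 2 ≤ i ∨ (j : ℕ) + 1 = i ∨ j = i ∨ (j : ℕ) = i + 1 ∨
        (i : ℕ) + 2 ≤ j := by omega
    · rw [hzero i j (Or.inr h)]
      grind
    · rw [hsub i j h.symm]
      grind
    · rw [hdiag]
      grind
    · rw [hsup i j h]
      grind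
    · rw [hzero i j (Or.inl h)]
      grind
  simp only [mulVec, dotProduct, hentry, Finset.sum_add_distrib, Finset.sum_ite_irrel,
    Fin.sum_ite_val_eq, Finset.sum_const_zero, tridiagMulVec]
  grind

theorem tridiagMulVec_congr [Semiring R] {n : ℕ} {d l u v v' : ℕ → R}
    (h : ∀ j < n, v j = v' j) {k : ℕ} (hk : k < n) :
    tridiagMulVec n d l u v k = tridiagMulVec n d l u v' k := by
  unfold tridiagMulVec
  split_ifs <;> grind

theorem tridiagMulVec_eq_lower_upper [CommSemiring R] {n : ℕ} {d l u d' m v : ℕ → R}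
    (hd0 : d 0 = d' 0) (hl : ∀ j, j + 1 < n → l j = m j * d' j)
    (hd : ∀ j, j + 1 < n → d (j + 1) = d' (j + 1) + m j * u j) {k : ℕ} (hk : k < n) :
    tridiagMulVec n d l u v k = tridiagMulVec n 1 m 0 (tridiagMulVec n d' 0 u v) k := by
  rcases k with _ | k
  · by_cases hk' : 1 < n <;> simp [tridiagMulVec, hk', hd0]
  · by_cases hk' : k + 1 + 1 < n <;>
      simp only [tridiagMulVec, Nat.add_sub_cancel, k.succ_pos, hk, hk', if_true, if_false,
        Pi.zero_apply, Pi.one_apply, zero_mul, one_mul, ite_self, add_zero, zero_add] <;>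
      rw [hl k hk, hd k hk] <;> ring

theorem tridiagMulVec_eq_of_forward_subst [Ring R] {n : ℕ} {m b y : ℕ → R} (hy0 : y 0 = b 0)
    (hy : ∀ i, i + 1 < n → y (i + 1) = b (i + 1) - m i * y i) {k : ℕ} (hk : k < n) :
    tridiagMulVec n 1 m 0 y k = b k := by
  rcases k with _ | k
  · simp [tridiagMulVec, hy0]
  · simp [tridiagMulVec, hy k hk]

theorem tridiagMulVec_eq_of_backward_subst {K : Type*} [Field K] {n : ℕ} {d u y w : ℕ → K}
    (hne : ∀ i, i < n → d i ≠ 0)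
    (hwlast : 0 < n → w (n - 1) = y (n - 1) / d (n - 1))
    (hw : ∀ i, i + 1 < n → w i = (y i - u i * w (i + 1)) / d i) {k : ℕ} (hk : k < n) :
    tridiagMulVec n d 0 u w k = y k := by
  have hdk := hne k hk
  by_cases hk' : k + 1 < n
  · simp only [tridiagMulVec, hk', if_true, Pi.zero_apply, zero_mul, ite_self, zero_add]
    rw [hw k hk', mul_div_cancel₀ _ hdk, sub_add_cancel]
  · obtain rfl : k = n - 1 := by omega
    simp only [tridiagMulVec, hk', if_false, Pi.zero_apply, zero_mul, ite_self, zero_add, add_zero]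
    rw [hwlast (by omega), mul_div_cancel₀ _ hdk]

theorem thomas_algorithm_solves (n : ℕ) (d l u d' l' b y w : ℕ → ℝ)
    (A : Matrix (Fin n) (Fin n) ℝ)
    (hdiag : ∀ i : Fin n, A i i = d i)
    (hsub : ∀ i j : Fin n, (i : ℕ) = (j : ℕ) + 1 → A i j = l j)
    (hsup : ∀ i j : Fin n, (j : ℕ) = (i : ℕ) + 1 → A i j = u i)
    (hzero : ∀ i j : Fin n, (i : ℕ) + 2 ≤ (j : ℕ) ∨ (j : ℕ) + 2 ≤ (i : ℕ) → A i j = 0)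
    (hd'0 : d' 0 = d 0)
    (hl' : ∀ i : ℕ, i + 1 < n → l' (i + 1) = l i / d' i)
    (hd' : ∀ i : ℕ, i + 1 < n → d' (i + 1) = d (i + 1) - l' (i + 1) * u i)
    (hne : ∀ i : ℕ, i < n → d' i ≠ 0)
    (hy0 : y 0 = b 0)
    (hy : ∀ i : ℕ, i + 1 < n → y (i + 1) = b (i + 1) - l' (i + 1) * y i)
    (hwlast : 0 < n → w (n - 1) = y (n - 1) / d' (n - 1))
    (hw : ∀ i : ℕ, i + 1 < n → w i = (y i - u i * w (i + 1)) / d' i) :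
    A *ᵥ (fun i : Fin n => w i) = fun i : Fin n => b i := by
  have hl : ∀ j, j + 1 < n → l j = l' (j + 1) * d' j := fun j hj => by
    rw [hl' j hj, div_mul_cancel₀ _ (hne j (by omega))]
  have hd : ∀ j, j + 1 < n → d (j + 1) = d' (j + 1) + l' (j + 1) * u j := fun j hj => by
    rw [hd' j hj, sub_add_cancel]
  funext i
  calc (A *ᵥ fun j : Fin n => w j) i = tridiagMulVec n d l u w i :=
        mulVec_apply_eq_tridiagMulVec hdiag hsub hsup hzero w i
    _ = tridiagMulVec n 1 (fun j => l' (j + 1)) 0 (tridiagMulVec n d' 0 u w) i :=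
        tridiagMulVec_eq_lower_upper hd'0.symm hl hd i.isLt
    _ = tridiagMulVec n 1 (fun j => l' (j + 1)) 0 y i :=
        tridiagMulVec_congr (fun _ hj => tridiagMulVec_eq_of_backward_subst hne hwlast hw hj)
          i.isLt
    _ = b i := tridiagMulVec_eq_of_forward_subst hy0 hy i.isLt
end
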